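/- arXiv:math/0406142 — 6 statements merged into one kernel-verified Lean document; each statement's English description precedes it below -/
import Mathlib

section
/- For every compact subset K of M, the partially holomorphic hull K̂_M is contained in the fibrewise convex hull of K; that is, K̂_M ⊆ {(ξ, z) ∈ M : z belongs to the convex hull (over ℝ) of the slice {w ∈ ℂⁿ : (ξ, w) ∈ K}}. -/
/-!
If `z` lies outside the convex hull of the slice `K_ξ` (compact, since `ℂⁿ` is
finite-dimensional), Hahn–Banach gives a `ℂ`-linear `g` with `Re g < u` on `K_ξ` and
`Re g z > u`. The points of `K` where `Re g ≥ u` form a compact set whose projection to `Ξ`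
misses `ξ`, so a smooth bump `φ : Ξ → [0, 1]` vanishes on that projection and equals `1` at `ξ`.
Then `φ(ξ') · exp (g z')` is partially holomorphic, bounded by `exp u` on `K`, and of modulus
`exp (Re g z) > exp u` at `(ξ, z)`.
-/

open scoped Manifold ContDiff
open Set

theorem IsCompact.slice {X Y : Type*} [TopologicalSpace X] [TopologicalSpace Y] [T1Space X]
    {K : Set (X × Y)} (hK : IsCompact K) (a : X) : IsCompact {y | (a, y) ∈ K} := by
  have : {y | (a, y) ∈ K} = Prod.snd '' (K ∩ Prod.fst ⁻¹' {a}) := by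
    ext y; simp
  rw [this]
  exact (hK.inter_right (isClosed_singleton.preimage continuous_fst)).image continuous_snd

section ConvexHull
variable {E : Type*} [AddCommGroup E] [Module ℝ E] [FiniteDimensional ℝ E]

theorem convexHull_eq_biUnion_image_stdSimplex (s : Set E) :
    convexHull ℝ s = ⋃ k ∈ Iic (Module.finrank ℝ E + 1),
      (fun q : (Fin k → ℝ) × (Fin k → E) => ∑ i, q.1 i • q.2 i) ''
        (stdSimplex ℝ (Fin k) ×ˢ univ.pi fun _ => s) := by
  apply Subset.antisymm
  · intro x hx
    obtain ⟨ι, _, z, w, hzs, hz, hw0, hw1, rfl⟩ := eq_pos_convex_span_of_mem_convexHull hx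
    let e := Fintype.equivFin ι
    refine mem_biUnion (x := Fintype.card ι) ?_
      ⟨(w ∘ e.symm, z ∘ e.symm), ⟨⟨fun i => (hw0 _).le, ?_⟩, fun i _ => hzs (mem_range_self _)⟩, ?_⟩
    · exact hz.card_le_finrank_succ.trans (Nat.succ_le_succ (Submodule.finrank_le _))
    · simpa [Function.comp_def] using (e.symm.sum_comp w).trans hw1
    · exact e.symm.sum_comp fun i => w i • z i
  · refine iUnion₂_subset fun k _ => ?_
    rintro _ ⟨⟨w, z⟩, ⟨hw, hz⟩, rfl⟩
    exact (convex_convexHull ℝ s).sum_mem (fun i _ => hw.1 i) hw.2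
      fun i _ => subset_convexHull ℝ s (hz i (mem_univ i))

theorem IsCompact.convexHull [TopologicalSpace E] [ContinuousAdd E] [ContinuousSMul ℝ E]
    {s : Set E} (hs : IsCompact s) : IsCompact (convexHull ℝ s) := by
  rw [convexHull_eq_biUnion_image_stdSimplex]
  exact (finite_Iic _).isCompact_biUnion fun k _ =>
    ((isCompact_stdSimplex _ _).prod (isCompact_univ_pi fun _ => hs)).image (by fun_prop)

end ConvexHull

section PeakFunction
variable {Ξ V : Type*} [NormedAddCommGroup V] [NormedSpace ℂ V]

noncomputable def peakFunction (φ : Ξ → ℝ) (g : StrongDual ℂ V) : Ξ × V → ℂ :=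
  fun p => φ p.1 • Complex.exp (g p.2)

theorem norm_peakFunction (φ : Ξ → ℝ) (g : StrongDual ℂ V) (p : Ξ × V) :
    ‖peakFunction φ g p‖ = |φ p.1| * Real.exp (g p.2).re := by
  rw [peakFunction, norm_smul, Complex.norm_exp, Real.norm_eq_abs]

theorem norm_peakFunction_le_exp {φ : Ξ → ℝ} (hφ : ∀ ξ, φ ξ ∈ Icc 0 1) (g : StrongDual ℂ V)
    {u : ℝ} {p : Ξ × V} (hp : (g p.2).re < u ∨ φ p.1 = 0) :
    ‖peakFunction φ g p‖ ≤ Real.exp u := by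
  rw [norm_peakFunction, abs_of_nonneg (hφ p.1).1]
  rcases hp with hp | hp
  · exact (mul_le_of_le_one_left (Real.exp_pos _).le (hφ p.1).2).trans (Real.exp_le_exp.2 hp.le)
  · simpa [hp] using (Real.exp_pos u).le

theorem differentiable_peakFunction_slice (φ : Ξ → ℝ) (g : StrongDual ℂ V) (ξ : Ξ) :
    Differentiable ℂ fun z => peakFunction φ g (ξ, z) := by
  simp only [peakFunction]
  fun_prop

theorem contMDiff_peakFunction {E H : Type*} [NormedAddCommGroup E] [NormedSpace ℝ E]
    [TopologicalSpace H] {I : ModelWithCorners ℝ E H} [TopologicalSpace Ξ] [ChartedSpace H Ξ]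
    {n : ℕ∞ω} {φ : Ξ → ℝ} (hφ : ContMDiff I 𝓘(ℝ) n φ) (g : StrongDual ℂ V) :
    ContMDiff (I.prod 𝓘(ℝ, V)) 𝓘(ℝ, ℂ) n (peakFunction φ g) := by
  have hexp : ContDiff ℝ n fun z : V => Complex.exp (g z) :=
    (g.contDiff.cexp).restrict_scalars ℝ
  exact (hφ.comp contMDiff_fst).smul (hexp.contMDiff.comp contMDiff_snd)

end PeakFunction

theorem exists_peakFunction_of_notMem_convexHull_slice
    {E H : Type*} [NormedAddCommGroup E] [NormedSpace ℝ E] [FiniteDimensional ℝ E]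
    [TopologicalSpace H] (I : ModelWithCorners ℝ E H)
    {Ξ : Type*} [TopologicalSpace Ξ] [ChartedSpace H Ξ] [IsManifold I ∞ Ξ] [T2Space Ξ]
    [SecondCountableTopology Ξ] {V : Type*} [NormedAddCommGroup V] [NormedSpace ℂ V]
    [FiniteDimensional ℂ V] {K : Set (Ξ × V)} (hK : IsCompact K) {ξ : Ξ} {z : V}
    (hz : z ∉ convexHull ℝ {w | (ξ, w) ∈ K}) :
    ∃ φ : Ξ → ℝ, ∃ g : StrongDual ℂ V, ContMDiff I 𝓘(ℝ) ∞ φ ∧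
      sSup ((fun y => ‖peakFunction φ g y‖) '' K) < ‖peakFunction φ g (ξ, z)‖ := by
  obtain ⟨g, u, hgu, huz⟩ := RCLike.geometric_hahn_banach_closed_point (𝕜 := ℂ)
    (convex_convexHull ℝ _) (hK.slice ξ).convexHull.isClosed hz
  have : LocallyCompactSpace Ξ := Manifold.locallyCompact_of_finiteDimensional I
  set T := Prod.fst '' (K ∩ {p | u ≤ (g p.2).re})
  have hT : IsCompact T := (hK.inter_right (isClosed_le (by fun_prop) (by fun_prop))).image
    continuous_fst
  have hξT : ξ ∉ T := by
    rintro ⟨p, ⟨hpK, hpu⟩, rfl⟩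
    exact hpu.not_gt (hgu _ (subset_convexHull ℝ _ hpK))
  obtain ⟨φ, hφT, hφx, hφ01⟩ := exists_contMDiffMap_zero_one_of_isClosed I hT.isClosed
    isClosed_singleton (disjoint_singleton_right.2 hξT)
  refine ⟨φ, g, φ.contMDiff, ?_⟩
  calc sSup ((fun y => ‖peakFunction φ g y‖) '' K) ≤ Real.exp u := by
        refine Real.sSup_le ?_ (Real.exp_pos u).le
        rintro _ ⟨y, hyK, rfl⟩
        exact norm_peakFunction_le_exp hφ01 g
          ((lt_or_ge (g y.2).re u).imp_right fun hy => hφT ⟨y, ⟨hyK, hy⟩, rfl⟩)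
    _ < Real.exp (g z).re := Real.exp_lt_exp.2 huz
    _ = ‖peakFunction φ g (ξ, z)‖ := by simp [norm_peakFunction, hφx (mem_singleton ξ)]

theorem stmt_0_general
    {E : Type*} [NormedAddCommGroup E] [NormedSpace ℝ E] [FiniteDimensional ℝ E]
    {H : Type*} [TopologicalSpace H] (I : ModelWithCorners ℝ E H)
    {Ξ : Type*} [TopologicalSpace Ξ] [ChartedSpace H Ξ]
    [IsManifold I (⊤ : ℕ∞) Ξ] [T2Space Ξ] [SecondCountableTopology Ξ]
    (n : ℕ) (M : Set (Ξ × (Fin n → ℂ)))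
    (K : Set (Ξ × (Fin n → ℂ))) (hK : IsCompact K) :
    {x | x ∈ M ∧ ∀ f : Ξ × (Fin n → ℂ) → ℂ,
        ContMDiffOn (I.prod 𝓘(ℝ, Fin n → ℂ)) 𝓘(ℝ, ℂ) (⊤ : ℕ∞) f M →
        (∀ ξ : Ξ, DifferentiableOn ℂ (fun z => f (ξ, z)) {z | (ξ, z) ∈ M}) →
        ‖f x‖ ≤ sSup ((fun y => ‖f y‖) '' K)}
      ⊆ {x | x ∈ M ∧ x.2 ∈ convexHull ℝ {w | (x.1, w) ∈ K}} := by
  rintro ⟨ξ, z⟩ ⟨hxM, hx⟩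
  refine ⟨hxM, ?_⟩
  by_contra hxK
  obtain ⟨φ, g, hφ, hpeak⟩ := exists_peakFunction_of_notMem_convexHull_slice I hK hxK
  exact (hx _ (contMDiff_peakFunction hφ g).contMDiffOn fun ξ =>
    (differentiable_peakFunction_slice φ g ξ).differentiableOn).not_gt hpeak

/-- For every compact subset `K` of `M`, the partially holomorphic hull of `K` in `M` is
contained in the fibrewise convex hull of `K`. Here `Ξ` is a finite-dimensional smooth real
manifold (Hausdorff, second countable), `M` is an open subset of `Ξ × ℂⁿ`, and a partially
holomorphic function on `M` is a smooth function `f : M → ℂ` which is holomorphic in the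
second variable on each slice. -/
theorem stmt_0
    {E : Type*} [NormedAddCommGroup E] [NormedSpace ℝ E] [FiniteDimensional ℝ E]
    {H : Type*} [TopologicalSpace H] (I : ModelWithCorners ℝ E H)
    {Ξ : Type*} [TopologicalSpace Ξ] [ChartedSpace H Ξ]
    [IsManifold I (⊤ : ℕ∞) Ξ] [T2Space Ξ] [SecondCountableTopology Ξ]
    (n : ℕ) (M : Set (Ξ × (Fin n → ℂ))) (hM : IsOpen M)
    (K : Set (Ξ × (Fin n → ℂ))) (hK : IsCompact K) (hKM : K ⊆ M) :
    {x | x ∈ M ∧ ∀ f : Ξ × (Fin n → ℂ) → ℂ,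
        ContMDiffOn (I.prod 𝓘(ℝ, Fin n → ℂ)) 𝓘(ℝ, ℂ) (⊤ : ℕ∞) f M →
        (∀ ξ : Ξ, DifferentiableOn ℂ (fun z => f (ξ, z)) {z | (ξ, z) ∈ M}) →
        ‖f x‖ ≤ sSup ((fun y => ‖f y‖) '' K)}
      ⊆ {x | x ∈ M ∧ x.2 ∈ convexHull ℝ {w | (x.1, w) ∈ K}} :=
  stmt_0_general I n M K hK
end

section
/- If every slice M_ξ = {z ∈ ℂⁿ : (ξ, z) ∈ M} is a convex subset of ℂⁿ, then for every compact subset K of M the partially holomorphic hull K̂_M is a compact subset of M. (This is the holomorphic-convexity part of the assertion that such an M is a Cartan manifold.) -/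
/-!
The hull lies over the projection of `K`, because smooth bump functions of `ξ` alone are partially
holomorphic, and it is bounded in the fibre direction, because complex-linear functionals of `z`
are. It is closed since it cannot accumulate at a point `(ξ₀, z₀) ∉ M`: Hahn–Banach separates `z₀`
from the open convex slice `M_ξ₀` by a real functional `u`, and if `g` is a bump function equal
to `1` at `ξ₀` and vanishing over the part of `K` where `u ≥ m` (for a level `m < u z₀` that `u`
does not reach on `K ∩ {ξ₀} × ℂⁿ`), then `g(ξ) exp ℓ(z)`, with `ℓ` complex-linear and `Re ℓ = u`,
has modulus at most `eᵐ` on `K` but larger than `eᵐ` near `(ξ₀, z₀)`.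
-/

open scoped Manifold

section PartiallyHolomorphic

open scoped ContDiff
open Set

variable {E : Type*} [NormedAddCommGroup E] [NormedSpace ℝ E]
  {H : Type*} [TopologicalSpace H] (I : ModelWithCorners ℝ E H)
  {Ξ : Type*} [TopologicalSpace Ξ] [ChartedSpace H Ξ]
  {F : Type*} [NormedAddCommGroup F] [NormedSpace ℂ F]

theorem Bornology.IsBounded.of_forall_clm [FiniteDimensional ℂ F] {S : Set F}
    (hS : ∀ ℓ : F →L[ℂ] ℂ, IsBounded (ℓ '' S)) : IsBounded S := by
  let e := (Module.finBasis ℂ F).equivFunL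
  have he : IsBounded (e '' S) := forall_isBounded_image_eval_iff.1 fun i => by
    rw [image_image]
    exact hS ((ContinuousLinearMap.proj (R := ℂ) (φ := fun _ => ℂ) i).comp (e : F →L[ℂ] _))
  simpa using e.symm.lipschitz.isBounded_image he

def IsPartiallyHolomorphicOn (M : Set (Ξ × F)) (f : Ξ × F → ℂ) : Prop :=
  ContMDiffOn (I.prod 𝓘(ℝ, F)) 𝓘(ℝ, ℂ) ∞ f M ∧
    ∀ ξ : Ξ, DifferentiableOn ℂ (fun z => f (ξ, z)) {z | (ξ, z) ∈ M}

def partiallyHolomorphicHull (M K : Set (Ξ × F)) : Set (Ξ × F) :=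
  {x | x ∈ M ∧ ∀ f, IsPartiallyHolomorphicOn I M f → ‖f x‖ ≤ sSup ((fun y => ‖f y‖) '' K)}

variable {I} {M K : Set (Ξ × F)}

namespace IsPartiallyHolomorphicOn

variable {f g : Ξ × F → ℂ}

theorem mul (hf : IsPartiallyHolomorphicOn I M f) (hg : IsPartiallyHolomorphicOn I M g) :
    IsPartiallyHolomorphicOn I M (fun x => f x * g x) :=
  ⟨(contDiff_mul (𝕜 := ℝ)).contMDiff.comp_contMDiffOn (hf.1.prodMk_space hg.1),
    fun ξ => (hf.2 ξ).mul (hg.2 ξ)⟩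

theorem cexp (hf : IsPartiallyHolomorphicOn I M f) :
    IsPartiallyHolomorphicOn I M (fun x => Complex.exp (f x)) :=
  ⟨Complex.contDiff_exp.contMDiff.comp_contMDiffOn hf.1, fun ξ => (hf.2 ξ).cexp⟩

end IsPartiallyHolomorphicOn

theorem isPartiallyHolomorphicOn_ofReal_comp_fst {g : Ξ → ℝ} (hg : ContMDiff I 𝓘(ℝ) ∞ g) :
    IsPartiallyHolomorphicOn I M (fun x => (g x.1 : ℂ)) :=
  ⟨(Complex.ofRealCLM.contDiff.comp_contMDiff (hg.comp contMDiff_fst)).contMDiffOn,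
    fun ξ => differentiableOn_const (g ξ : ℂ)⟩

theorem isPartiallyHolomorphicOn_clm_comp_snd (ℓ : F →L[ℂ] ℂ) :
    IsPartiallyHolomorphicOn I M (fun x => ℓ x.2) :=
  ⟨((ℓ.restrictScalars ℝ).contDiff.comp_contMDiff contMDiff_snd).contMDiffOn,
    fun _ => ℓ.differentiable.differentiableOn⟩

theorem isBounded_image_clm_snd_partiallyHolomorphicHull (ℓ : F →L[ℂ] ℂ) :
    Bornology.IsBounded ((fun x => ℓ x.2) '' partiallyHolomorphicHull I M K) := by
  refine (Metric.isBounded_closedBall (x := 0) (r := sSup ((fun y => ‖ℓ y.2‖) '' K))).subset ?_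
  rintro _ ⟨x, hx, rfl⟩
  simpa using hx.2 _ (isPartiallyHolomorphicOn_clm_comp_snd ℓ)

theorem exists_clm_lt_of_notMem [T1Space Ξ] (hM : IsOpen M) {ξ : Ξ} {z : F}
    (hconv : Convex ℝ {w | (ξ, w) ∈ M}) (hK : IsCompact K) (hKM : K ⊆ M) (hz : (ξ, z) ∉ M) :
    ∃ u : F →L[ℝ] ℝ, ∃ m < u z, ∀ y ∈ K, y.1 = ξ → u y.2 < m := by
  obtain ⟨u, hu⟩ :=
    geometric_hahn_banach_open_point hconv (hM.preimage (Continuous.prodMk_right ξ)) hz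
  have hKξ : IsCompact (K ∩ Prod.fst ⁻¹' {ξ}) :=
    hK.inter_right (isClosed_singleton.preimage continuous_fst)
  rcases (K ∩ Prod.fst ⁻¹' {ξ}).eq_empty_or_nonempty with hempty | hne
  · exact ⟨u, u z - 1, by linarith, fun y hy hyξ => (hempty.subset ⟨hy, hyξ⟩).elim⟩
  obtain ⟨⟨ξ', w⟩, ⟨hwK, hwξ⟩, hmax⟩ :=
    hKξ.exists_isMaxOn hne (u.continuous.comp continuous_snd).continuousOn
  obtain rfl : ξ' = ξ := hwξ
  have huw : u w < u z := hu w (hKM hwK)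
  refine ⟨u, (u w + u z) / 2, by linarith, fun y hy hyξ => ?_⟩
  have huy : u y.2 ≤ u w := hmax ⟨hy, hyξ⟩
  linarith

section Smooth

variable [FiniteDimensional ℝ E] [IsManifold I ∞ Ξ] [T2Space Ξ] [SigmaCompactSpace Ξ]

theorem partiallyHolomorphicHull_subset_fst_preimage (hK : IsCompact K) :
    partiallyHolomorphicHull I M K ⊆ Prod.fst ⁻¹' (Prod.fst '' K) := by
  intro x hx
  by_contra hx1
  obtain ⟨g, hg0, hg1, -⟩ := exists_contMDiffMap_zero_one_of_isClosed (n := ⊤) I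
    (hK.image continuous_fst).isClosed isClosed_singleton (disjoint_singleton_right.2 hx1)
  have hle := hx.2 _ (isPartiallyHolomorphicOn_ofReal_comp_fst (M := M) g.contMDiff)
  have hsup : sSup ((fun y => ‖(g y.1 : ℂ)‖) '' K) ≤ 0 := by
    refine Real.sSup_nonpos ?_
    rintro _ ⟨y, hy, rfl⟩
    simp [hg0 ⟨y, hy, rfl⟩]
  simp only [hg1 rfl, Pi.one_apply, Complex.ofReal_one, norm_one] at hle
  linarith

theorem exists_isPartiallyHolomorphicOn_sSup_lt (hM : IsOpen M) {x : Ξ × F}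
    (hconv : Convex ℝ {w | (x.1, w) ∈ M}) (hK : IsCompact K) (hKM : K ⊆ M) (hx : x ∉ M) :
    ∃ f, IsPartiallyHolomorphicOn I M f ∧ Continuous f ∧
      sSup ((fun y => ‖f y‖) '' K) < ‖f x‖ := by
  obtain ⟨u, m, hmx, hKm⟩ := exists_clm_lt_of_notMem hM hconv hK hKM hx
  have hB : IsCompact (K ∩ {y | m ≤ u y.2}) :=
    hK.inter_right (isClosed_le continuous_const (u.continuous.comp continuous_snd))
  have hxB : x.1 ∉ Prod.fst '' (K ∩ {y | m ≤ u y.2}) := by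
    rintro ⟨y, ⟨hyK, hym⟩, hyx⟩
    exact (hKm y hyK hyx).not_ge hym
  obtain ⟨g, hg0, hg1, hg01⟩ := exists_contMDiffMap_zero_one_of_isClosed (n := ⊤) I
    (hB.image continuous_fst).isClosed isClosed_singleton (disjoint_singleton_right.2 hxB)
  let ℓ : F →L[ℂ] ℂ := StrongDual.extendRCLike u
  have hre : ∀ w, (ℓ w).re = u w := StrongDual.re_extendRCLike_apply (𝕜 := ℂ) u
  let f : Ξ × F → ℂ := fun y => (g y.1 : ℂ) * Complex.exp (ℓ y.2)
  have hnorm : ∀ y, ‖f y‖ = g y.1 * Real.exp (u y.2) := fun y => by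
    simp only [f, norm_mul, Complex.norm_exp, hre,
      Complex.norm_real, Real.norm_eq_abs, abs_of_nonneg (hg01 y.1).1]
  refine ⟨f, (isPartiallyHolomorphicOn_ofReal_comp_fst g.contMDiff).mul
    (isPartiallyHolomorphicOn_clm_comp_snd ℓ).cexp, by fun_prop, ?_⟩
  calc sSup ((fun y => ‖f y‖) '' K) ≤ Real.exp m := by
        refine Real.sSup_le ?_ (Real.exp_pos m).le
        rintro _ ⟨y, hy, rfl⟩
        simp only [hnorm]
        by_cases hym : m ≤ u y.2
        · rw [hg0 ⟨y, ⟨hy, hym⟩, rfl⟩, Pi.zero_apply, zero_mul]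
          positivity
        · calc g y.1 * Real.exp (u y.2) ≤ 1 * Real.exp (u y.2) := by
                gcongr
                exact (hg01 y.1).2
            _ ≤ Real.exp m := by
                rw [one_mul]
                exact Real.exp_le_exp.2 (not_le.1 hym).le
    _ < Real.exp (u x.2) := Real.exp_lt_exp.2 hmx
    _ = ‖f x‖ := by rw [hnorm, hg1 rfl, Pi.one_apply, one_mul]

theorem closure_partiallyHolomorphicHull_subset (hM : IsOpen M)
    (hconv : ∀ ξ : Ξ, Convex ℝ {z | (ξ, z) ∈ M}) (hK : IsCompact K) (hKM : K ⊆ M) :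
    closure (partiallyHolomorphicHull I M K) ⊆ M := by
  intro x hx
  by_contra hxM
  obtain ⟨f, hf, hfc, hlt⟩ :=
    exists_isPartiallyHolomorphicOn_sSup_lt (I := I) hM (hconv x.1) hK hKM hxM
  obtain ⟨y, hyf, hy⟩ := mem_closure_iff.1 hx _ (isOpen_lt continuous_const hfc.norm) hlt
  exact (hy.2 f hf).not_gt hyf

end Smooth

theorem isClosed_partiallyHolomorphicHull (hM : IsOpen M)
    (hclosure : closure (partiallyHolomorphicHull I M K) ⊆ M) :
    IsClosed (partiallyHolomorphicHull I M K) := by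
  refine isClosed_of_closure_subset fun x hx => ⟨hclosure hx, fun f hf => ?_⟩
  have hfx : ContinuousAt f x := hf.1.continuousOn.continuousAt (hM.mem_nhds (hclosure hx))
  exact ContinuousWithinAt.closure_le hx hfx.norm.continuousWithinAt continuousWithinAt_const
    fun y hy => hy.2 f hf

theorem isCompact_partiallyHolomorphicHull [FiniteDimensional ℂ F] [FiniteDimensional ℝ E]
    [IsManifold I ∞ Ξ] [T2Space Ξ] [SigmaCompactSpace Ξ] (hM : IsOpen M)
    (hconv : ∀ ξ : Ξ, Convex ℝ {z | (ξ, z) ∈ M}) (hK : IsCompact K) (hKM : K ⊆ M) :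
    IsCompact (partiallyHolomorphicHull I M K) := by
  have hsnd : Bornology.IsBounded (Prod.snd '' partiallyHolomorphicHull I M K) :=
    .of_forall_clm fun ℓ => by
      simpa [image_image] using isBounded_image_clm_snd_partiallyHolomorphicHull ℓ
  refine ((hK.image continuous_fst).prod hsnd.isCompact_closure).of_isClosed_subset
    (isClosed_partiallyHolomorphicHull hM
      (closure_partiallyHolomorphicHull_subset hM hconv hK hKM)) fun x hx => ⟨?_, ?_⟩
  · exact partiallyHolomorphicHull_subset_fst_preimage hK hx
  · exact subset_closure ⟨x, hx, rfl⟩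

end PartiallyHolomorphic

/-- If every slice `M_ξ = {z ∈ ℂⁿ : (ξ, z) ∈ M}` of the open set `M ⊆ Ξ × ℂⁿ` is convex,
then for every compact `K ⊆ M` the partially holomorphic hull of `K` in `M` is a compact
subset of `M` (the holomorphic-convexity part of `M` being a Cartan manifold). -/
theorem stmt_1
    {E : Type*} [NormedAddCommGroup E] [NormedSpace ℝ E] [FiniteDimensional ℝ E]
    {H : Type*} [TopologicalSpace H] (I : ModelWithCorners ℝ E H)
    {Ξ : Type*} [TopologicalSpace Ξ] [ChartedSpace H Ξ]
    [IsManifold I ((⊤ : ℕ∞) : WithTop ℕ∞) Ξ] [T2Space Ξ] [SecondCountableTopology Ξ]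
    (n : ℕ) (M : Set (Ξ × (Fin n → ℂ))) (hM : IsOpen M)
    (hconv : ∀ ξ : Ξ, Convex ℝ {z : Fin n → ℂ | (ξ, z) ∈ M})
    (K : Set (Ξ × (Fin n → ℂ))) (hK : IsCompact K) (hKM : K ⊆ M) :
    IsCompact {x | x ∈ M ∧ ∀ f : Ξ × (Fin n → ℂ) → ℂ,
        ContMDiffOn (I.prod 𝓘(ℝ, Fin n → ℂ)) 𝓘(ℝ, ℂ) (⊤ : ℕ∞) f M →
        (∀ ξ : Ξ, DifferentiableOn ℂ (fun z => f (ξ, z)) {z | (ξ, z) ∈ M}) →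
        ‖f x‖ ≤ sSup ((fun y => ‖f y‖) '' K)} := by
  have : LocallyCompactSpace Ξ := Manifold.locallyCompact_of_finiteDimensional I
  simpa only [partiallyHolomorphicHull, IsPartiallyHolomorphicOn, and_imp] using
    isCompact_partiallyHolomorphicHull hM hconv hK hKM
end

section
/- For all θ, φ ∈ ℝ, the set W_{θ,φ} = {x ∈ ℝ³ : x₁ cos θ + x₂ sin θ > x₃ and x₁ cos φ + x₂ sin φ > −x₃} is an open convex cone contained in V, and the union of the sets W_{θ,φ} over all pairs with θ ≠ φ equals V. -/
/-! The two defining inequalities of `W_{θ,φ}` are strict linear inequalities, so `W_{θ,φ}` is an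
open convex cone. By Cauchy–Schwarz both right-hand sides are at most `√(x₁² + x₂²)`, which
squeezes `|x₃|` below it. Conversely, for `x ∈ V` take `θ` the polar angle of `(x₁, x₂)`, so that
both right-hand sides equal `√(x₁² + x₂²) > |x₃|` when `φ = θ + 2π`. -/

open Real

theorem mul_cos_add_mul_sin_sq_le (a b θ : ℝ) : (a * cos θ + b * sin θ) ^ 2 ≤ a ^ 2 + b ^ 2 := by
  nlinarith [sin_sq_add_cos_sq θ, sq_nonneg (a * sin θ - b * cos θ)]

theorem exists_mul_cos_add_mul_sin_eq_sqrt (a b : ℝ) :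
    ∃ θ, a * cos θ + b * sin θ = √(a ^ 2 + b ^ 2) := by
  set z : ℂ := ⟨a, b⟩
  have hnorm : ‖z‖ = √(a ^ 2 + b ^ 2) := by
    rw [Complex.norm_def, Complex.normSq_mk, sq, sq]
  refine ⟨Complex.arg z, ?_⟩
  nth_rw 1 [← hnorm, show a = z.re from rfl, show b = z.im from rfl,
    ← Complex.norm_mul_cos_arg, ← Complex.norm_mul_sin_arg]
  linear_combination ‖z‖ * sin_sq_add_cos_sq (Complex.arg z)

theorem sq_lt_of_lt_of_neg_lt {a u v r : ℝ} (hu : a < u) (hv : -a < v) (hur : u ^ 2 ≤ r)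
    (hvr : v ^ 2 ≤ r) : a ^ 2 < r := by
  rcases le_or_gt 0 a with ha | ha <;> nlinarith

def wedge (θ φ : ℝ) : ConvexCone ℝ (Fin 3 → ℝ) where
  carrier := {x | x 2 < x 0 * cos θ + x 1 * sin θ ∧ -(x 2) < x 0 * cos φ + x 1 * sin φ}
  smul_mem' c hc x hx := by
    simp only [Set.mem_ofPred_eq, Pi.smul_apply, smul_eq_mul] at hx ⊢
    constructor <;> nlinarith [hx.1, hx.2]
  add_mem' x hx y hy := by
    simp only [Set.mem_ofPred_eq, Pi.add_apply] at hx hy ⊢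
    constructor <;> linarith [hx.1, hx.2, hy.1, hy.2]

theorem isOpen_wedge (θ φ : ℝ) : IsOpen (wedge θ φ : Set (Fin 3 → ℝ)) := by
  change IsOpen ({x : Fin 3 → ℝ | (_ : ℝ) < _} ∩ {x | (_ : ℝ) < _})
  exact (isOpen_lt (by fun_prop) (by fun_prop)).inter (isOpen_lt (by fun_prop) (by fun_prop))

theorem sq_lt_of_mem_wedge {θ φ : ℝ} {x : Fin 3 → ℝ} (hx : x ∈ wedge θ φ) :
    x 2 ^ 2 < x 0 ^ 2 + x 1 ^ 2 :=
  sq_lt_of_lt_of_neg_lt hx.1 hx.2 (mul_cos_add_mul_sin_sq_le _ _ θ)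
    (mul_cos_add_mul_sin_sq_le _ _ φ)

theorem exists_mem_wedge_add_two_pi {x : Fin 3 → ℝ} (hx : x 2 ^ 2 < x 0 ^ 2 + x 1 ^ 2) :
    ∃ θ, x ∈ wedge θ (θ + 2 * π) := by
  obtain ⟨θ, hθ⟩ := exists_mul_cos_add_mul_sin_eq_sqrt (x 0) (x 1)
  have habs : |x 2| < √(x 0 ^ 2 + x 1 ^ 2) := by
    rwa [Real.lt_sqrt (abs_nonneg _), sq_abs]
  refine ⟨θ, ?_, ?_⟩
  · rw [hθ]; exact (le_abs_self _).trans_lt habs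
  · rw [cos_add_two_pi, sin_add_two_pi, hθ]; exact (neg_le_abs _).trans_lt habs

/-- For all `θ, φ ∈ ℝ`, the set
`W_{θ,φ} = {x ∈ ℝ³ : x₁ cos θ + x₂ sin θ > x₃ and x₁ cos φ + x₂ sin φ > −x₃}` is an open
convex cone contained in `V = {x : x₁² + x₂² > x₃²}`, and the union of the `W_{θ,φ}` over
all pairs with `θ ≠ φ` equals `V`. -/
theorem stmt_6
    (V : Set (Fin 3 → ℝ)) (hV : V = {x | x 2 ^ 2 < x 0 ^ 2 + x 1 ^ 2})
    (W : ℝ → ℝ → Set (Fin 3 → ℝ))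
    (hW : ∀ θ φ, W θ φ = {x | x 2 < x 0 * Real.cos θ + x 1 * Real.sin θ ∧
        -(x 2) < x 0 * Real.cos φ + x 1 * Real.sin φ}) :
    (∀ θ φ : ℝ, IsOpen (W θ φ) ∧ Convex ℝ (W θ φ) ∧
      (∀ x ∈ W θ φ, ∀ y ∈ W θ φ, x + y ∈ W θ φ) ∧
      (∀ t : ℝ, 0 < t → ∀ x ∈ W θ φ, t • x ∈ W θ φ) ∧
      W θ φ ⊆ V) ∧
    (⋃ θ : ℝ, ⋃ φ : ℝ, ⋃ _h : θ ≠ φ, W θ φ) = V := by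
  obtain rfl : W = fun θ φ ↦ (wedge θ φ : Set (Fin 3 → ℝ)) := funext₂ hW
  subst hV
  refine ⟨fun θ φ ↦ ⟨isOpen_wedge θ φ, (wedge θ φ).convex, fun x hx y hy ↦ (wedge θ φ).add_mem hx hy,
    fun t ht x hx ↦ (wedge θ φ).smul_mem ht hx, fun x ↦ sq_lt_of_mem_wedge⟩, ?_⟩
  ext x
  simp only [Set.mem_iUnion]
  refine ⟨fun ⟨θ, φ, _, hx⟩ ↦ sq_lt_of_mem_wedge hx, fun hx ↦ ?_⟩
  obtain ⟨θ, hθ⟩ := exists_mem_wedge_add_two_pi hx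
  exact ⟨θ, θ + 2 * π, by linarith [pi_pos], hθ⟩
end

section
/- For every m ≥ 1, if S is a real m × m skew-symmetric matrix (Sᵀ = −S) and P is a real m × m symmetric positive definite matrix, then det(S + P) > 0. (In particular, the wedge {S + P : S skew, P symmetric positive definite} is contained in the cone V = {X : det X > 0} of real m × m matrices of positive determinant.) -/
/-!
Along the segment `t ↦ t • S + P` the quadratic form of `t • S + P` equals that of `P`, because a
skew-symmetric form vanishes on the diagonal. So every matrix on the segment has trivial kernel,
its determinant never vanishes, and by the intermediate value theorem it keeps the sign of
`det P > 0` all the way to `t = 1`.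
-/

open Matrix

theorem Continuous.pos_of_forall_ne_zero {X α : Type*} [TopologicalSpace X] [PreconnectedSpace X]
    [LinearOrder α] [TopologicalSpace α] [OrderClosedTopology α] [Zero α] {f : X → α}
    (hf : Continuous f) (hne : ∀ x, f x ≠ 0) {a : X} (ha : 0 < f a) (b : X) : 0 < f b := by
  by_contra! hb
  obtain ⟨x, hx⟩ := intermediate_value_univ b a hf ⟨hb, ha.le⟩
  exact hne x hx

namespace Matrix

variable {n R : Type*} [Fintype n]

theorem dotProduct_mulVec_self_eq_zero_of_transpose_eq_neg [CommRing R] [NoZeroDivisors R]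
    [CharZero R] {S : Matrix n n R} (hS : Sᵀ = -S) (v : n → R) : v ⬝ᵥ S *ᵥ v = 0 := by
  rw [← CharZero.eq_neg_self_iff]
  calc v ⬝ᵥ S *ᵥ v = v ⬝ᵥ Sᵀ *ᵥ v := (dotProduct_transpose_mulVec S v v).symm
    _ = -(v ⬝ᵥ S *ᵥ v) := by rw [hS, neg_mulVec, dotProduct_neg]

theorem det_ne_zero_of_dotProduct_mulVec_pos [DecidableEq n] [CommRing R] [IsDomain R]
    [Preorder R] {A : Matrix n n R} (hA : ∀ v ≠ 0, 0 < v ⬝ᵥ A *ᵥ v) : A.det ≠ 0 := by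
  intro hdet
  obtain ⟨v, hv, hAv⟩ := exists_mulVec_eq_zero_iff.mpr hdet
  simpa [hAv] using hA v hv

theorem PosDef.det_add_ne_zero_of_transpose_eq_neg [DecidableEq n] {S P : Matrix n n ℝ}
    (hP : P.PosDef) (hS : Sᵀ = -S) : (S + P).det ≠ 0 := by
  refine det_ne_zero_of_dotProduct_mulVec_pos fun v hv ↦ ?_
  rw [add_mulVec, dotProduct_add, dotProduct_mulVec_self_eq_zero_of_transpose_eq_neg hS, zero_add]
  simpa using hP.dotProduct_mulVec_pos hv

theorem PosDef.det_add_pos_of_transpose_eq_neg [DecidableEq n] {S P : Matrix n n ℝ}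
    (hP : P.PosDef) (hS : Sᵀ = -S) : 0 < (S + P).det := by
  have hne (t : ℝ) : (t • S + P).det ≠ 0 :=
    hP.det_add_ne_zero_of_transpose_eq_neg (by rw [transpose_smul, hS, smul_neg])
  have hcont : Continuous fun t : ℝ ↦ (t • S + P).det := by fun_prop
  simpa using hcont.pos_of_forall_ne_zero hne (a := 0) (by simpa using hP.det_pos) 1

end Matrix

theorem stmt_12_general (m : ℕ)
    (S P : Matrix (Fin m) (Fin m) ℝ)
    (hS : Sᵀ = -S) (hP : P.PosDef) :
    0 < (S + P).det :=
  hP.det_add_pos_of_transpose_eq_neg hS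

/-- For `m ≥ 1`, if `S` is a real `m × m` skew-symmetric matrix and `P` is a real `m × m`
symmetric positive definite matrix, then `det(S + P) > 0`. -/
theorem stmt_12 (m : ℕ) (hm : 1 ≤ m)
    (S P : Matrix (Fin m) (Fin m) ℝ)
    (hS : Sᵀ = -S) (hP : P.PosDef) :
    0 < (S + P).det :=
  stmt_12_general m S P hS hP
end

section
/- For every x ∈ V (i.e. x₁² + x₂² > x₃²) there exists a unique pair (p, q) ∈ ℝ² satisfying p² + q² = 1, p x₁ + q x₂ = x₃, and p x₂ − q x₁ > 0; moreover this pair is given explicitly by p = (x₁ x₃ + x₂ √(x₁² + x₂² − x₃²)) / (x₁² + x₂²) and q = (x₂ x₃ − x₁ √(x₁² + x₂² − x₃²)) / (x₁² + x₂²). (Hence the map π : V → S¹, π(x) = (p, q), is well defined.) -/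
/-- For every `x ∈ V` (i.e. `x₁² + x₂² > x₃²`) there is a unique pair `(p, q)` with
`p² + q² = 1`, `p x₁ + q x₂ = x₃` and `p x₂ − q x₁ > 0`, given explicitly by
`p = (x₁x₃ + x₂√(x₁²+x₂²−x₃²))/(x₁²+x₂²)` and `q = (x₂x₃ − x₁√(x₁²+x₂²−x₃²))/(x₁²+x₂²)`.
Hence the map `π : V → S¹` is well defined. -/
theorem stmt_13 (x₁ x₂ x₃ : ℝ) (h : x₃ ^ 2 < x₁ ^ 2 + x₂ ^ 2)
    (p₀ q₀ : ℝ)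
    (hp₀ : p₀ = (x₁ * x₃ + x₂ * Real.sqrt (x₁ ^ 2 + x₂ ^ 2 - x₃ ^ 2)) / (x₁ ^ 2 + x₂ ^ 2))
    (hq₀ : q₀ = (x₂ * x₃ - x₁ * Real.sqrt (x₁ ^ 2 + x₂ ^ 2 - x₃ ^ 2)) / (x₁ ^ 2 + x₂ ^ 2)) :
    (p₀ ^ 2 + q₀ ^ 2 = 1 ∧ p₀ * x₁ + q₀ * x₂ = x₃ ∧ 0 < p₀ * x₂ - q₀ * x₁) ∧
    ∀ p q : ℝ, p ^ 2 + q ^ 2 = 1 → p * x₁ + q * x₂ = x₃ → 0 < p * x₂ - q * x₁ →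
      p = p₀ ∧ q = q₀ := by
  set s : ℝ := Real.sqrt (x₁ ^ 2 + x₂ ^ 2 - x₃ ^ 2) with hs_def
  have hr : (0:ℝ) < x₁ ^ 2 + x₂ ^ 2 := by nlinarith [sq_nonneg x₃]
  have hs2 : s ^ 2 = x₁ ^ 2 + x₂ ^ 2 - x₃ ^ 2 := Real.sq_sqrt (by linarith)
  have hspos : 0 < s := Real.sqrt_pos.mpr (by linarith)
  have hrne : (x₁ ^ 2 + x₂ ^ 2) ≠ 0 := ne_of_gt hr
  have h1 : p₀ ^ 2 + q₀ ^ 2 = 1 := by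
    rw [hp₀, hq₀]; field_simp; nlinarith [hs2]
  have h2 : p₀ * x₁ + q₀ * x₂ = x₃ := by
    rw [hp₀, hq₀]; field_simp; ring
  have h3 : p₀ * x₂ - q₀ * x₁ = s := by
    rw [hp₀, hq₀]; field_simp; nlinarith [hs2]
  refine ⟨⟨h1, h2, by rw [h3]; exact hspos⟩, ?_⟩
  intro p q hpq hx3 hpos
  have key : (p * x₁ + q * x₂) ^ 2 + (p * x₂ - q * x₁) ^ 2
      = (p ^ 2 + q ^ 2) * (x₁ ^ 2 + x₂ ^ 2) := by ring
  have ht : (p * x₂ - q * x₁) ^ 2 = s ^ 2 := by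
    rw [hpq, hx3] at key; linarith
  have ht' : p * x₂ - q * x₁ = s := by nlinarith
  constructor
  · rw [hp₀]; field_simp; linear_combination x₁ * hx3 + x₂ * ht'
  · rw [hq₀]; field_simp; linear_combination x₂ * hx3 - x₁ * ht'
end

section
/- For each (p, q) ∈ S¹ and r ∈ ℝ, the set L_{p,q,r} = {z ∈ ℂ³ : p z₁ + q z₂ − z₃ = i r and p·Re(z₂) − q·Re(z₁) > 0} is a convex subset of the tube Z = {z ∈ ℂ³ : Re z ∈ V} contained in an imaginary translate of the complex linear subspace {z : p z₁ + q z₂ = z₃}, and Z is the disjoint union of the sets L_{p,q,r} over (p, q, r) ∈ S¹ × ℝ (a foliation of Z by half-planes in complex hyperplanes). -/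
/-!
Writing `x = Re z`, the condition `p z₁ + q z₂ − z₃ = i r` splits into `p x₁ + q x₂ = x₃` and
`r = p Im z₁ + q Im z₂ − Im z₃`. By Lagrange's identity
`(p x₁ + q x₂)² + (p x₂ − q x₁)² = (p² + q²)(x₁² + x₂²)`, a unit vector `(p, q)` with
`p x₁ + q x₂ = x₃` exists iff `x₃² ≤ x₁² + x₂²`, and then `p x₂ − q x₁ = ±√(x₁² + x₂² − x₃²)`.
The positive sign is available exactly when `x₃² < x₁² + x₂²`, and fixing it leaves a nonsingular
linear system for `(p, q)`, so every point of the tube lies on exactly one leaf.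
-/

open Complex

namespace SpacelikeTube

section Circle

variable {p q a b c : ℝ}

theorem sq_add_sq_eq_of_mem_circle (hpq : p ^ 2 + q ^ 2 = 1) (hc : p * a + q * b = c) :
    c ^ 2 + (p * b - q * a) ^ 2 = a ^ 2 + b ^ 2 := by
  rw [← hc]
  linear_combination (a ^ 2 + b ^ 2) * hpq

theorem mul_sub_mul_eq_sqrt (hpq : p ^ 2 + q ^ 2 = 1) (hc : p * a + q * b = c)
    (hpos : 0 < p * b - q * a) : p * b - q * a = √(a ^ 2 + b ^ 2 - c ^ 2) := by
  rw [eq_comm, Real.sqrt_eq_iff_mul_self_eq_of_pos hpos]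
  linear_combination sq_add_sq_eq_of_mem_circle hpq hc

theorem sq_lt_sq_add_sq_of_mem_circle (hpq : p ^ 2 + q ^ 2 = 1) (hc : p * a + q * b = c)
    (hpos : 0 < p * b - q * a) : c ^ 2 < a ^ 2 + b ^ 2 := by
  linarith [sq_add_sq_eq_of_mem_circle hpq hc, pow_pos hpos 2]

theorem existsUnique_mem_circle (h : c ^ 2 < a ^ 2 + b ^ 2) :
    ∃! pq : ℝ × ℝ, pq.1 ^ 2 + pq.2 ^ 2 = 1 ∧ pq.1 * a + pq.2 * b = c ∧ 0 < pq.1 * b - pq.2 * a := by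
  set s := √(a ^ 2 + b ^ 2 - c ^ 2)
  have hs : 0 < s := Real.sqrt_pos.2 (by linarith)
  have hs2 : s ^ 2 = a ^ 2 + b ^ 2 - c ^ 2 := Real.sq_sqrt (by linarith)
  have hD : a ^ 2 + b ^ 2 ≠ 0 := by nlinarith [sq_nonneg c]
  refine ⟨((a * c + b * s) / (a ^ 2 + b ^ 2), (b * c - a * s) / (a ^ 2 + b ^ 2)), ⟨?_, ?_, ?_⟩, ?_⟩
  · field_simp
    linear_combination (a ^ 2 + b ^ 2) * hs2
  · field_simp
    ring
  · have : (a * c + b * s) / (a ^ 2 + b ^ 2) * b - (b * c - a * s) / (a ^ 2 + b ^ 2) * a = s := by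
      field_simp
      ring
    rwa [this]
  · rintro ⟨p, q⟩ ⟨hpq, hc, hpos⟩
    have hsq := mul_sub_mul_eq_sqrt hpq hc hpos
    ext
    · rw [eq_div_iff hD]
      linear_combination a * hc + b * hsq
    · rw [eq_div_iff hD]
      linear_combination b * hc - a * hsq

end Circle

def tube : Set (Fin 3 → ℂ) := {z | (z 2).re ^ 2 < (z 0).re ^ 2 + (z 1).re ^ 2}

def leaf (p q r : ℝ) : Set (Fin 3 → ℂ) :=
  {z | (p : ℂ) * z 0 + (q : ℂ) * z 1 - z 2 = I * (r : ℂ) ∧ 0 < p * (z 1).re - q * (z 0).re}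

variable {p q r : ℝ} {z : Fin 3 → ℂ}

theorem mem_leaf_iff : z ∈ leaf p q r ↔
    (p * (z 0).re + q * (z 1).re = (z 2).re ∧ 0 < p * (z 1).re - q * (z 0).re) ∧
      r = p * (z 0).im + q * (z 1).im - (z 2).im := by
  simp only [leaf, Set.mem_ofPred_eq, Complex.ext_iff, sub_re, add_re, sub_im, add_im,
    mul_re, mul_im, I_re, I_im, ofReal_re, ofReal_im]
  constructor
  · rintro ⟨⟨hre, him⟩, hpos⟩
    exact ⟨⟨by linarith, hpos⟩, by linarith⟩
  · rintro ⟨⟨hre, hpos⟩, rfl⟩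
    exact ⟨⟨by linarith, by ring⟩, hpos⟩

theorem convex_leaf : Convex ℝ (leaf p q r) := by
  have hlin : IsLinearMap ℝ fun z : Fin 3 → ℂ => (p : ℂ) * z 0 + (q : ℂ) * z 1 - z 2 :=
    ⟨fun z w => by simp only [Pi.add_apply]; ring,
      fun t z => by simp only [Pi.smul_apply, real_smul]; ring⟩
  have hre : IsLinearMap ℝ fun z : Fin 3 → ℂ => p * (z 1).re - q * (z 0).re :=
    ⟨fun z w => by simp only [Pi.add_apply, add_re]; ring,
      fun t z => by simp only [Pi.smul_apply, smul_re, smul_eq_mul]; ring⟩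
  exact ((convex_singleton _).is_linear_preimage hlin).inter (convex_halfSpace_gt hre 0)

theorem leaf_subset_tube (hpq : p ^ 2 + q ^ 2 = 1) : leaf p q r ⊆ tube := fun _ hz =>
  have ⟨⟨hc, hpos⟩, _⟩ := mem_leaf_iff.1 hz
  sq_lt_sq_add_sq_of_mem_circle hpq hc hpos

theorem leaf_subset_affineHyperplane :
    leaf p q r ⊆ {z | (p : ℂ) * z 0 + (q : ℂ) * z 1 = z 2 + I * (r : ℂ)} := fun _ hz =>
  eq_add_of_sub_eq' hz.1

theorem existsUnique_mem_leaf (hz : z ∈ tube) :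
    ∃! pqr : ℝ × ℝ × ℝ, pqr.1 ^ 2 + pqr.2.1 ^ 2 = 1 ∧ z ∈ leaf pqr.1 pqr.2.1 pqr.2.2 := by
  obtain ⟨⟨p, q⟩, ⟨hpq, hc, hpos⟩, huniq⟩ := existsUnique_mem_circle hz
  refine ⟨(p, q, p * (z 0).im + q * (z 1).im - (z 2).im),
    ⟨hpq, mem_leaf_iff.2 ⟨⟨hc, hpos⟩, rfl⟩⟩, ?_⟩
  rintro ⟨p', q', r'⟩ ⟨hpq', hmem⟩
  obtain ⟨⟨hc', hpos'⟩, hr'⟩ := mem_leaf_iff.1 hmem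
  obtain ⟨rfl, rfl⟩ := Prod.ext_iff.1 (huniq (p', q') ⟨hpq', hc', hpos'⟩)
  exact congrArg _ (congrArg _ hr')

end SpacelikeTube

open SpacelikeTube in
/-- For each `(p, q) ∈ S¹` and `r ∈ ℝ`, the set
`L_{p,q,r} = {z ∈ ℂ³ : p z₁ + q z₂ − z₃ = i r and p Re z₂ − q Re z₁ > 0}` is a convex
subset of the tube `Z = {z : Re z ∈ V}` contained in the imaginary translate
`{z : p z₁ + q z₂ = z₃ + i r}` of the complex hyperplane `{z : p z₁ + q z₂ = z₃}`, and `Z`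
is the disjoint union of the `L_{p,q,r}` over `(p, q, r) ∈ S¹ × ℝ`. -/
theorem stmt_15
    (Z : Set (Fin 3 → ℂ))
    (hZ : Z = {z | (z 2).re ^ 2 < (z 0).re ^ 2 + (z 1).re ^ 2})
    (L : ℝ → ℝ → ℝ → Set (Fin 3 → ℂ))
    (hL : ∀ p q r, L p q r =
      {z | (p : ℂ) * z 0 + (q : ℂ) * z 1 - z 2 = Complex.I * (r : ℂ) ∧
           0 < p * (z 1).re - q * (z 0).re}) :
    (∀ p q r : ℝ, p ^ 2 + q ^ 2 = 1 →
        Convex ℝ (L p q r) ∧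
        L p q r ⊆ Z ∧
        L p q r ⊆ {z | (p : ℂ) * z 0 + (q : ℂ) * z 1 = z 2 + Complex.I * (r : ℂ)}) ∧
    (∀ z ∈ Z, ∃! pqr : ℝ × ℝ × ℝ,
        pqr.1 ^ 2 + pqr.2.1 ^ 2 = 1 ∧ z ∈ L pqr.1 pqr.2.1 pqr.2.2) := by
  obtain rfl : Z = tube := hZ
  obtain rfl : L = leaf := funext fun p => funext fun q => funext fun r => hL p q r
  exact ⟨fun _ _ _ hpq => ⟨convex_leaf, leaf_subset_tube hpq, leaf_subset_affineHyperplane⟩,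
    fun _ => existsUnique_mem_leaf⟩
end
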